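/- If q(t) = R(t)·q₀ with R(t) the block-diagonal rotation diag(e^{i√(sλ)t}, e^{i√λ t}) acting on each body's ℝ⁴ = ℝ²×ℝ² coordinates, and q₀ is a balanced configuration satisfying M⁻¹∇U(q₀) + λŜq₀ = 0 with S = diag(s,s,1,1), then q(t) solves Newton's equations q̈ = M⁻¹∇U(q). -/

import Mathlib

/-! `q(t) = R(t) q₀` with `R(t) = diag(rot ω₁ t, rot ω₂ t)`, `ω₁ = √(sλ)`, `ω₂ = √λ`. Since
`R'(t) = R(t) G` with `G = diag(ω₁ J, ω₂ J)` and `J² = -1`, we get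
`q̈ = R(t) G² q₀ = -λ R(t) Ŝ q₀ = R(t) M⁻¹∇U(q₀)` by the balance condition, and since `R(t)` is a
linear isometry, `∇U` commutes with it, so this is `M⁻¹∇U(q(t))`. -/

open scoped BigOperators

/-- `ℝ⁴ = ℝ² × ℝ²`, indexed by `Fin 2 ⊕ Fin 2`. -/
abbrev E4 : Type := EuclideanSpace ℝ (Fin 2 ⊕ Fin 2)

noncomputable def newtonU {n : ℕ} (m : Fin n → ℝ) (q : Fin n → E4) : ℝ :=
  ∑ i : Fin n, ∑ j : Fin n, if i < j then m i * m j / ‖q i - q j‖ else 0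

noncomputable def gradU {n : ℕ} (m : Fin n → ℝ) (q : Fin n → E4) : Fin n → E4 := fun i =>
  ∑ j ∈ Finset.univ.erase i, (-(m i * m j) / ‖q i - q j‖ ^ 3) • (q i - q j)

noncomputable def sApply (s : ℝ) (x : E4) : E4 :=
  WithLp.toLp 2 fun j => (Sum.elim (fun _ => s) (fun _ => (1 : ℝ)) j) * x j

def IsBalanced {n : ℕ} (m : Fin n → ℝ) (s lam : ℝ) (q : Fin n → E4) : Prop :=
  ∀ i, (m i)⁻¹ • gradU m q i + lam • sApply s (q i) = 0

/-- The planar rotation matrix `e^{iωt}`. -/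
noncomputable def rot (ω t : ℝ) : Matrix (Fin 2) (Fin 2) ℝ :=
  !![Real.cos (ω * t), -Real.sin (ω * t); Real.sin (ω * t), Real.cos (ω * t)]

/-- The trajectory `q(t) = diag(e^{i√(sλ)t}, e^{i√λ t}) · q₀`, rotating each body's first
`ℝ²`-component with angular velocity `√(sλ)` and its second with `√λ`. -/
noncomputable def traj {n : ℕ} (s lam : ℝ) (q₀ : Fin n → E4) (t : ℝ) : Fin n → E4 :=
  fun i => WithLp.toLp 2 fun j =>
    match j with
    | Sum.inl a => ∑ b : Fin 2, rot (Real.sqrt (s * lam)) t a b * q₀ i (Sum.inl b)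
    | Sum.inr a => ∑ b : Fin 2, rot (Real.sqrt lam) t a b * q₀ i (Sum.inr b)

open scoped Matrix

noncomputable section

def quarterTurn : Matrix (Fin 2) (Fin 2) ℝ := !![0, -1; 1, 0]

theorem quarterTurn_mul_self : quarterTurn * quarterTurn = -1 := by
  ext a b
  fin_cases a <;> fin_cases b <;> simp [quarterTurn]

theorem rot_mulVec_dotProduct_self (ω t : ℝ) (v : Fin 2 → ℝ) :
    (rot ω t *ᵥ v) ⬝ᵥ (rot ω t *ᵥ v) = v ⬝ᵥ v := by
  simp only [rot, Matrix.mulVec, dotProduct, Fin.sum_univ_two, Matrix.of_apply,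
    Matrix.cons_val', Matrix.cons_val_zero, Matrix.cons_val_one, Matrix.empty_val',
    Matrix.cons_val_fin_one]
  linear_combination (v 0 ^ 2 + v 1 ^ 2) * Real.sin_sq_add_cos_sq (ω * t)

theorem hasDerivAt_rot_mulVec (ω : ℝ) (v : Fin 2 → ℝ) (t : ℝ) :
    HasDerivAt (fun τ => rot ω τ *ᵥ v) ((rot ω t * (ω • quarterTurn)) *ᵥ v) t := by
  have hcos := ((hasDerivAt_id t).const_mul ω).cos
  have hsin := ((hasDerivAt_id t).const_mul ω).sin
  simp only [id, mul_one] at hcos hsin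
  rw [hasDerivAt_pi]
  intro a
  fin_cases a
  · convert (hcos.mul_const (v 0)).add (hsin.mul_const (v 1)).neg using 1
    · funext τ; simp [rot, Matrix.mulVec, dotProduct, Fin.sum_univ_two]
    · simp [rot, quarterTurn, Matrix.mulVec, dotProduct, Fin.sum_univ_two]
  · convert (hsin.mul_const (v 0)).add (hcos.mul_const (v 1)) using 1
    · funext τ; simp [rot, Matrix.mulVec, dotProduct, Fin.sum_univ_two]
    · simp [rot, quarterTurn, Matrix.mulVec, dotProduct, Fin.sum_univ_two]

def blockDiagMap (A B : Matrix (Fin 2) (Fin 2) ℝ) : E4 →ₗ[ℝ] E4 where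
  toFun x := WithLp.toLp 2 (Sum.elim (A *ᵥ (x ∘ .inl)) (B *ᵥ (x ∘ .inr)))
  map_add' x y := by
    ext (a | a) <;> simp only [WithLp.ofLp_add, Pi.add_comp, Matrix.mulVec_add, Sum.elim_inl,
      Sum.elim_inr, Pi.add_apply]
  map_smul' c x := by
    ext (a | a) <;> simp only [WithLp.ofLp_smul, Pi.smul_comp, Matrix.mulVec_smul, Sum.elim_inl,
      Sum.elim_inr, Pi.smul_apply, RingHom.id_apply]

@[simp]
theorem blockDiagMap_apply_inl (A B : Matrix (Fin 2) (Fin 2) ℝ) (x : E4) (a : Fin 2) :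
    blockDiagMap A B x (.inl a) = (A *ᵥ (x ∘ .inl)) a := rfl

@[simp]
theorem blockDiagMap_apply_inr (A B : Matrix (Fin 2) (Fin 2) ℝ) (x : E4) (a : Fin 2) :
    blockDiagMap A B x (.inr a) = (B *ᵥ (x ∘ .inr)) a := rfl

theorem blockDiagMap_blockDiagMap (A B C D : Matrix (Fin 2) (Fin 2) ℝ) (x : E4) :
    blockDiagMap A B (blockDiagMap C D x) = blockDiagMap (A * C) (B * D) x := by
  ext (a | a)
  · exact congrFun (Matrix.mulVec_mulVec _ A C) a
  · exact congrFun (Matrix.mulVec_mulVec _ B D) a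

theorem hasDerivAt_blockDiagMap {A B : ℝ → Matrix (Fin 2) (Fin 2) ℝ}
    {A' B' : Matrix (Fin 2) (Fin 2) ℝ} {t : ℝ}
    (hA : ∀ v, HasDerivAt (fun τ => A τ *ᵥ v) (A' *ᵥ v) t)
    (hB : ∀ v, HasDerivAt (fun τ => B τ *ᵥ v) (B' *ᵥ v) t) (x : E4) :
    HasDerivAt (fun τ => blockDiagMap (A τ) (B τ) x) (blockDiagMap A' B' x) t := by
  have hpi : HasDerivAt (fun τ => Sum.elim (A τ *ᵥ (x ∘ .inl)) (B τ *ᵥ (x ∘ .inr)))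
      (Sum.elim (A' *ᵥ (x ∘ .inl)) (B' *ᵥ (x ∘ .inr))) t := by
    rw [hasDerivAt_pi]
    rintro (a | a)
    · exact hasDerivAt_pi.1 (hA _) a
    · exact hasDerivAt_pi.1 (hB _) a
  exact (PiLp.hasFDerivAt_toLp 2 _).comp_hasDerivAt t hpi

def blockRot (ω₁ ω₂ t : ℝ) : E4 →ₗᵢ[ℝ] E4 where
  toLinearMap := blockDiagMap (rot ω₁ t) (rot ω₂ t)
  norm_map' x := by
    have h := congrArg₂ (· + ·) (rot_mulVec_dotProduct_self ω₁ t (x ∘ .inl))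
      (rot_mulVec_dotProduct_self ω₂ t (x ∘ .inr))
    simp only [EuclideanSpace.norm_eq, Real.norm_eq_abs, sq_abs, Fintype.sum_sum_type]
    simpa [dotProduct, blockDiagMap, ← sq] using congrArg Real.sqrt h

theorem blockRot_apply (ω₁ ω₂ t : ℝ) (x : E4) :
    blockRot ω₁ ω₂ t x = blockDiagMap (rot ω₁ t) (rot ω₂ t) x := rfl

theorem hasDerivAt_blockRot (ω₁ ω₂ : ℝ) (x : E4) (t : ℝ) :
    HasDerivAt (fun τ => blockRot ω₁ ω₂ τ x)
      (blockRot ω₁ ω₂ t (blockDiagMap (ω₁ • quarterTurn) (ω₂ • quarterTurn) x)) t := by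
  simp only [blockRot_apply, blockDiagMap_blockDiagMap]
  exact hasDerivAt_blockDiagMap (hasDerivAt_rot_mulVec ω₁ · t) (hasDerivAt_rot_mulVec ω₂ · t) x

theorem deriv_deriv_blockRot (ω₁ ω₂ : ℝ) (x : E4) (t : ℝ) :
    deriv (deriv fun τ => blockRot ω₁ ω₂ τ x) t =
      blockRot ω₁ ω₂ t (blockDiagMap (ω₁ • quarterTurn) (ω₂ • quarterTurn)
        (blockDiagMap (ω₁ • quarterTurn) (ω₂ • quarterTurn) x)) := by
  rw [funext fun τ => (hasDerivAt_blockRot ω₁ ω₂ x τ).deriv]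
  exact (hasDerivAt_blockRot ω₁ ω₂ _ t).deriv

theorem blockDiagMap_quarterTurn_sq {s ω₁ ω₂ : ℝ} (hω : ω₁ ^ 2 = s * ω₂ ^ 2) (x : E4) :
    blockDiagMap (ω₁ • quarterTurn) (ω₂ • quarterTurn)
        (blockDiagMap (ω₁ • quarterTurn) (ω₂ • quarterTurn) x) = -(ω₂ ^ 2 • sApply s x) := by
  rw [blockDiagMap_blockDiagMap, smul_mul_smul_comm, smul_mul_smul_comm, quarterTurn_mul_self]
  ext (a | a) <;>
    simp only [blockDiagMap_apply_inl, blockDiagMap_apply_inr, sApply, Matrix.smul_mulVec,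
      Matrix.neg_mulVec, Matrix.one_mulVec, ← sq, hω, Pi.smul_apply, Pi.neg_apply,
      Function.comp_apply, WithLp.ofLp_neg, WithLp.ofLp_smul, Sum.elim_inl, Sum.elim_inr,
      smul_eq_mul] <;> ring

theorem gradU_comp_linearIsometry {n : ℕ} (m : Fin n → ℝ) (L : E4 →ₗᵢ[ℝ] E4)
    (q : Fin n → E4) (i : Fin n) :
    gradU m (fun k => L (q k)) i = L (gradU m q i) := by
  simp only [gradU, map_sum, map_smul, ← map_sub, LinearIsometry.norm_map]

theorem traj_eq_blockRot {n : ℕ} (s lam : ℝ) (q₀ : Fin n → E4) (t : ℝ) :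
    traj s lam q₀ t = fun i => blockRot √(s * lam) √lam t (q₀ i) := by
  funext i
  refine congrArg (WithLp.toLp 2) (funext fun j => ?_)
  cases j <;> rfl

end

theorem balanced_gives_relative_equilibrium_general {n : ℕ} (m : Fin n → ℝ)
    (s : ℝ) (hs : 1 < s) (q₀ : Fin n → E4)
    (lam : ℝ) (hlam : 0 < lam)
    (hq : IsBalanced m s lam q₀) :
    ∀ (t : ℝ) (i : Fin n),
      deriv (deriv (fun τ : ℝ => traj s lam q₀ τ i)) t
        = (m i)⁻¹ • gradU m (traj s lam q₀ t) i := by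
  intro t i
  have hω : √(s * lam) ^ 2 = s * √lam ^ 2 := by
    rw [Real.sq_sqrt (mul_pos (by linarith) hlam).le, Real.sq_sqrt hlam.le]
  calc deriv (deriv fun τ => traj s lam q₀ τ i) t
      = blockRot √(s * lam) √lam t (-(√lam ^ 2 • sApply s (q₀ i))) := by
        simp only [traj_eq_blockRot, deriv_deriv_blockRot, blockDiagMap_quarterTurn_sq hω]
    _ = blockRot √(s * lam) √lam t ((m i)⁻¹ • gradU m q₀ i) := by
        rw [Real.sq_sqrt hlam.le, eq_neg_of_add_eq_zero_left (hq i)]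
    _ = (m i)⁻¹ • gradU m (traj s lam q₀ t) i := by
        rw [map_smul, ← gradU_comp_linearIsometry, traj_eq_blockRot]

/-- If `q₀` is a balanced configuration with `M⁻¹∇U(q₀) + λŜq₀ = 0`, then the rotating
trajectory `q(t) = diag(e^{i√(sλ)t}, e^{i√λ t}) q₀` solves Newton's equations
`q̈ = M⁻¹∇U(q)`. -/
theorem balanced_gives_relative_equilibrium {n : ℕ} (hn : 2 ≤ n) (m : Fin n → ℝ)
    (hm : ∀ i, 0 < m i) (s : ℝ) (hs : 1 < s) (q₀ : Fin n → E4)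
    (hcoll : ∀ i j, i ≠ j → q₀ i ≠ q₀ j) (lam : ℝ) (hlam : 0 < lam)
    (hq : IsBalanced m s lam q₀) :
    ∀ (t : ℝ) (i : Fin n),
      deriv (deriv (fun τ : ℝ => traj s lam q₀ τ i)) t
        = (m i)⁻¹ • gradU m (traj s lam q₀ t) i :=
  balanced_gives_relative_equilibrium_general m s hs q₀ lam hlam hq
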